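/- Assume k − 1 ≤ LR and fix 1 ≤ j ≤ k − 1. Then a_{j+1}(π^(j)) = a_j(π^(j+1)) and b_j(π^(j+1)) = b_{j+1}(π^(j)) + 1; consequently w_j(π^(j+1)) − w_{j+1}(π^(j)) = β_C > 0 and w_j(π^(j+1)) + w_{j+1}(π^(j+1)) = w_j(π^(j)) + w_{j+1}(π^(j)). -/

import Mathlib

/-- Relative location `h_π(i) = #{1 ≤ j ≤ i : π j = π i}`. -/
def relLoc (π : ℕ → ℕ) (i : ℕ) : ℕ :=
  ((Finset.Icc 1 i).filter (fun j => π j = π i)).card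

/-- Intra-cluster coefficient `a_i(π) = d_I + 1 − h_π(i)` (truncated subtraction). -/
def aCoef (dI : ℕ) (π : ℕ → ℕ) (i : ℕ) : ℕ :=
  dI + 1 - relLoc π i

/-- Cross-cluster coefficient `b_i(π) = max(0, d_C − (i − h_π(i)))` (truncated subtraction). -/
def bCoef (dC : ℕ) (π : ℕ → ℕ) (i : ℕ) : ℕ :=
  dC - (i - relLoc π i)

/-- Part incoming weight `w_i(π)`: for a separate position (`π i = 0`) it is
`(d_I + d_C + 1 − i)·β_C`, otherwise `a_i(π)·β_I + b_i(π)·β_C`. -/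
noncomputable def weight (dI dC : ℕ) (βI βC : ℝ) (π : ℕ → ℕ) (i : ℕ) : ℝ :=
  if π i = 0 then ((dI + dC + 1 - i : ℕ) : ℝ) * βC
  else (aCoef dI π i : ℝ) * βI + (bCoef dC π i : ℝ) * βC

/-- Min-cut `MC(π) = Σ_{i=1}^k min(α, w_i(π))`. -/
noncomputable def MC (k dI dC : ℕ) (βI βC α : ℝ) (π : ℕ → ℕ) : ℝ :=
  ∑ i ∈ Finset.Icc 1 k, min α (weight dI dC βI βC π i)

/-- A cluster order: a `k`-tuple with entries in `{0, 1, …, L}`. -/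
def IsClusterOrder (L k : ℕ) (π : ℕ → ℕ) : Prop :=
  ∀ i, 1 ≤ i → i ≤ k → π i ≤ L

/-- A selected node distribution `(s_0, s_1, …, s_L)`:
`R ≥ s_1 ≥ s_2 ≥ … ≥ s_L` and `s_0 + s_1 + … + s_L = k`. -/
def IsDist (L R k : ℕ) (s : ℕ → ℕ) : Prop :=
  (∀ i, 1 ≤ i → i + 1 ≤ L → s (i + 1) ≤ s i) ∧
  (∀ i, 1 ≤ i → i ≤ L → s i ≤ R) ∧
  ∑ i ∈ Finset.range (L + 1), s i = k

/-- `π ∈ Π(s)`: `π` is a cluster order with `#{1 ≤ j ≤ k : π j = c} = s c` for all `0 ≤ c ≤ L`. -/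
def MemPi (L k : ℕ) (s : ℕ → ℕ) (π : ℕ → ℕ) : Prop :=
  IsClusterOrder L k π ∧
  ∀ c, c ≤ L → ((Finset.Icc 1 k).filter (fun j => π j = c)).card = s c

/-- Vertical order of distribution `s` (possibly with separate entries, whose positions are
not constrained here):  over the cluster positions (`π i ≠ 0`) in increasing order, relative
locations are nondecreasing, with ties broken by increasing cluster index. -/
def IsVerticalOrder (L k : ℕ) (s : ℕ → ℕ) (π : ℕ → ℕ) : Prop :=
  MemPi L k s π ∧
  ∀ i j, 1 ≤ i → i < j → j ≤ k → π i ≠ 0 → π j ≠ 0 →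
    relLoc π i ≤ relLoc π j ∧ (relLoc π i = relLoc π j → π i < π j)

/-- The distribution `s*` (no separate node): `s*_0 = 0`, `s*_i = R` for `1 ≤ i ≤ ⌊k/R⌋`,
`s*_{⌊k/R⌋+1} = k − ⌊k/R⌋·R`, and `0` beyond. -/
def sStar0 (R k : ℕ) : ℕ → ℕ := fun i =>
  if i = 0 then 0
  else if i ≤ k / R then R
  else if i = k / R + 1 then k - k / R * R
  else 0

/-- The distribution with one separate node: `s_0 = 1`, `s_i = R` for `1 ≤ i ≤ ⌊(k−1)/R⌋`,
`s_{⌊(k−1)/R⌋+1} = (k−1) − ⌊(k−1)/R⌋·R`, and `0` beyond. -/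
def sStar1 (R k : ℕ) : ℕ → ℕ := fun i =>
  if i = 0 then 1
  else if i ≤ (k - 1) / R then R
  else if i = (k - 1) / R + 1 then (k - 1) - (k - 1) / R * R
  else 0

/-- `π^(j)`: the cluster order with exactly one separate entry, located at position `j`,
whose cluster entries form the vertical order of the distribution `sStar1 R k`. -/
def IsPiJ (L R k j : ℕ) (π : ℕ → ℕ) : Prop :=
  π j = 0 ∧ IsVerticalOrder L k (sStar1 R k) π

/-!
Deleting the separate node from `π^(j)` and from `π^(j+1)` leaves two vertical orders of one and
the same distribution without separate nodes, and such an order is unique: at the first position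
where two of them differ, the tie-breaking rule fails in one of them. So position `j + 1` of
`π^(j)` and position `j` of `π^(j+1)` carry the same cluster at the same relative location `h`,
which gives the identity for `a`. The identity for `b` holds because no truncation occurs: the
first cluster has `min(R, k - 1)` entries, at most `h` of them before position `j` and none at the
separate position `j + 1`, whence `j + 1 - h ≤ d_C`. The weight identities are then arithmetic.
-/

def prefixCount (π : ℕ → ℕ) (c t : ℕ) : ℕ :=
  ((Finset.Icc 1 t).filter (fun i => π i = c)).card

theorem relLoc_eq_prefixCount (π : ℕ → ℕ) (i : ℕ) : relLoc π i = prefixCount π (π i) i := rfl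

theorem prefixCount_succ (π : ℕ → ℕ) (c t : ℕ) :
    prefixCount π c (t + 1) = prefixCount π c t + if π (t + 1) = c then 1 else 0 := by
  unfold prefixCount
  rw [← Finset.insert_Icc_right_eq_Icc_add_one (by omega), Finset.filter_insert]
  split_ifs
  · exact Finset.card_insert_of_notMem (by simp)
  · rfl

theorem prefixCount_mono (π : ℕ → ℕ) (c : ℕ) : Monotone (prefixCount π c) := fun _ _ h =>
  Finset.card_le_card (Finset.filter_subset_filter _ (Finset.Icc_subset_Icc_right h))

theorem prefixCount_le_add_sub (π : ℕ → ℕ) (c : ℕ) {t n : ℕ} (h : t ≤ n) :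
    prefixCount π c n ≤ prefixCount π c t + (n - t) := by
  induction n, h using Nat.le_induction with
  | base => simp
  | succ n hn ih => rw [prefixCount_succ]; split_ifs <;> omega

theorem prefixCount_congr {π σ : ℕ → ℕ} {t : ℕ} (h : ∀ i, 1 ≤ i → i ≤ t → π i = σ i) (c : ℕ) :
    prefixCount π c t = prefixCount σ c t := by
  unfold prefixCount
  congr 1
  refine Finset.filter_congr fun i hi => ?_
  rw [Finset.mem_Icc] at hi
  rw [h i hi.1 hi.2]

theorem relLoc_congr {π σ : ℕ → ℕ} {t : ℕ} (h : ∀ i, 1 ≤ i → i ≤ t → π i = σ i) (ht : 1 ≤ t) :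
    relLoc π t = relLoc σ t := by
  rw [relLoc_eq_prefixCount, relLoc_eq_prefixCount, h t ht le_rfl, prefixCount_congr h]

theorem relLoc_le_self (π : ℕ → ℕ) (i : ℕ) : relLoc π i ≤ i :=
  (Finset.card_filter_le _ _).trans (by simp)

/-- The first occurrence of `c` after position `t`, when there is one. -/
theorem exists_prefixCount_eq_succ {π : ℕ → ℕ} {c t n : ℕ}
    (h : prefixCount π c t < prefixCount π c n) :
    ∃ i, t < i ∧ i ≤ n ∧ π i = c ∧ prefixCount π c i = prefixCount π c t + 1 := by
  induction n with
  | zero => exact absurd h (Nat.not_lt_zero _)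
  | succ n ih =>
    by_cases hn : prefixCount π c t < prefixCount π c n
    · obtain ⟨i, hti, hin, hi⟩ := ih hn
      exact ⟨i, hti, by omega, hi⟩
    · have htn : t ≤ n := by
        by_contra! hnt
        exact absurd (prefixCount_mono π c (show n + 1 ≤ t by omega)) (by omega)
      have := prefixCount_mono π c htn
      rw [prefixCount_succ] at h
      split_ifs at h with hc
      · refine ⟨n + 1, by omega, le_rfl, hc, ?_⟩
        rw [prefixCount_succ, if_pos hc]
        omega
      · omega

/-- `skipAt z r` is the `r`-th positive integer different from `z` (for `1 ≤ z`). -/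
def skipAt (z r : ℕ) : ℕ := if r < z then r else r + 1

theorem skipAt_strictMono (z : ℕ) : StrictMono (skipAt z) := fun r r' h => by
  unfold skipAt; split_ifs <;> omega

theorem skipAt_of_lt {z r : ℕ} (h : r < z) : skipAt z r = r := if_pos h

theorem skipAt_self (z : ℕ) : skipAt z z = z + 1 := if_neg (lt_irrefl z)

theorem skipAt_ne (z r : ℕ) : skipAt z r ≠ z := by unfold skipAt; split_ifs <;> omega

theorem le_skipAt (z r : ℕ) : r ≤ skipAt z r := by unfold skipAt; split_ifs <;> omega

theorem skipAt_le_succ (z r : ℕ) : skipAt z r ≤ r + 1 := by unfold skipAt; split_ifs <;> omega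

theorem prefixCount_skipAt {π : ℕ → ℕ} {z c : ℕ} (hz : 1 ≤ z) (hc : π z ≠ c) (t : ℕ) :
    prefixCount π c (skipAt z t) = prefixCount (π ∘ skipAt z) c t := by
  unfold prefixCount
  rw [← Finset.card_image_of_injective ((Finset.Icc 1 t).filter fun r => (π ∘ skipAt z) r = c)
    (skipAt_strictMono z).injective]
  congr 1
  ext i
  simp only [Finset.mem_filter, Finset.mem_Icc, Finset.mem_image, Function.comp_apply]
  constructor
  · rintro ⟨⟨hi1, hit⟩, hic⟩
    have hiz : i ≠ z := by rintro rfl; exact hc hic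
    have hskip : skipAt z (if i < z then i else i - 1) = i := by
      unfold skipAt; split_ifs <;> omega
    refine ⟨if i < z then i else i - 1, ⟨⟨?_, ?_⟩, by rw [hskip]; exact hic⟩, hskip⟩
    · split_ifs <;> omega
    · by_contra! h
      have := skipAt_strictMono z h
      omega
  · rintro ⟨r, ⟨⟨hr1, hrt⟩, hrc⟩, rfl⟩
    exact ⟨⟨(le_skipAt z r).trans' hr1, (skipAt_strictMono z).monotone hrt⟩, hrc⟩

theorem relLoc_comp_skipAt {π : ℕ → ℕ} {z i : ℕ} (hz : 1 ≤ z) (hi : π (skipAt z i) ≠ π z) :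
    relLoc (π ∘ skipAt z) i = relLoc π (skipAt z i) :=
  (prefixCount_skipAt hz hi.symm i).symm

namespace MemPi

variable {L n : ℕ} {s π : ℕ → ℕ}

theorem prefixCount_eq (h : MemPi L n s π) {c : ℕ} (hc : c ≤ L) : prefixCount π c n = s c :=
  h.2 c hc

theorem ne_zero (h : MemPi L n s π) (hs : s 0 = 0) {i : ℕ} (hi1 : 1 ≤ i) (hin : i ≤ n) :
    π i ≠ 0 := by
  intro hi
  have hpos : 0 < prefixCount π 0 n :=
    Finset.card_pos.2 ⟨i, Finset.mem_filter.2 ⟨Finset.mem_Icc.2 ⟨hi1, hin⟩, hi⟩⟩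
  rw [h.prefixCount_eq (Nat.zero_le L), hs] at hpos
  exact lt_irrefl 0 hpos

theorem ne_zero_of_ne (h : MemPi L n s π) (hs : s 0 = 1) {z : ℕ} (hz : π z = 0) (hz1 : 1 ≤ z)
    (hzn : z ≤ n) {i : ℕ} (hi1 : 1 ≤ i) (hin : i ≤ n) (hiz : i ≠ z) : π i ≠ 0 := by
  intro hi
  have hcard : prefixCount π 0 n ≤ 1 := (h.prefixCount_eq (Nat.zero_le L)).trans_le hs.le
  exact hiz (Finset.card_le_one.1 hcard i (by simp [hi1, hin, hi]) z (by simp [hz1, hzn, hz]))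

end MemPi

namespace IsVerticalOrder

variable {L n : ℕ} {s π ρ σ : ℕ → ℕ}

theorem prefixCount_le_relLoc (h : IsVerticalOrder L n s ρ) {c i : ℕ} (hc : c ≠ 0) (hin : i ≤ n)
    (hi : ρ i ≠ 0) : prefixCount ρ c i ≤ relLoc ρ i := by
  suffices ∀ t ≤ i, prefixCount ρ c t ≤ relLoc ρ i from this i le_rfl
  intro t hti
  induction t with
  | zero => exact Nat.zero_le _
  | succ t ih =>
    rw [prefixCount_succ]
    split_ifs with hct
    · have hrel : prefixCount ρ c t + 1 = relLoc ρ (t + 1) := by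
        rw [relLoc_eq_prefixCount, hct, prefixCount_succ, if_pos hct]
      rcases (show t + 1 = i ∨ t + 1 < i by omega) with rfl | hlt
      · exact hrel.le
      · exact hrel ▸ (h.2 _ _ (by omega) hlt hin (hct ▸ hc) hi).1
    · exact ih (by omega)

/-- `σ` must place the cluster `ρ i` at some later position, with relative location
`relLoc ρ i`. -/
theorem relLoc_le_of_eqOn (hρ : IsVerticalOrder L n s ρ) (hσ : IsVerticalOrder L n s σ)
    (hs : s 0 = 0) {i : ℕ} (hi1 : 1 ≤ i) (hin : i ≤ n) (heq : ∀ t, 1 ≤ t → t < i → ρ t = σ t)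
    (hne : ρ i ≠ σ i) :
    relLoc σ i ≤ relLoc ρ i ∧ (relLoc σ i = relLoc ρ i → σ i < ρ i) := by
  obtain ⟨t, rfl⟩ : ∃ t, i = t + 1 := ⟨i - 1, by omega⟩
  set c := ρ (t + 1)
  have hagree : prefixCount σ c (t + 1) = prefixCount ρ c t := by
    rw [prefixCount_succ, if_neg (Ne.symm hne), add_zero,
      prefixCount_congr (fun r hr1 hrt => heq r hr1 (by omega))]
  have hρrel : relLoc ρ (t + 1) = prefixCount ρ c t + 1 := by
    rw [relLoc_eq_prefixCount, prefixCount_succ, if_pos rfl]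
  have hremaining : prefixCount σ c (t + 1) < prefixCount σ c n := by
    have hcL : c ≤ L := hρ.1.1 _ hi1 hin
    rw [hσ.1.prefixCount_eq hcL, ← hρ.1.prefixCount_eq hcL, hagree]
    have hle : relLoc ρ (t + 1) ≤ prefixCount ρ c n := prefixCount_mono ρ c hin
    omega
  obtain ⟨i', hti', hi'n, hσi', hcount⟩ := exists_prefixCount_eq_succ hremaining
  have hσrel : relLoc σ i' = relLoc ρ (t + 1) := by
    rw [relLoc_eq_prefixCount, hσi', hcount, hagree, hρrel]
  rw [← hσrel, ← hσi']
  exact hσ.2 _ _ hi1 hti' hi'n (hσ.1.ne_zero hs hi1 hin) (hσ.1.ne_zero hs (by omega) hi'n)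

theorem eqOn (hρ : IsVerticalOrder L n s ρ) (hσ : IsVerticalOrder L n s σ) (hs : s 0 = 0) :
    ∀ i, 1 ≤ i → i ≤ n → ρ i = σ i := by
  intro i
  induction i using Nat.strong_induction_on with
  | _ i ih =>
    intro hi1 hin
    by_contra hne
    have hagree : ∀ t, 1 ≤ t → t < i → ρ t = σ t := fun t ht1 hti => ih t hti ht1 (by omega)
    have h₁ := relLoc_le_of_eqOn hρ hσ hs hi1 hin hagree hne
    have h₂ := relLoc_le_of_eqOn hσ hρ hs hi1 hin (fun t ht1 hti => (hagree t ht1 hti).symm)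
      (Ne.symm hne)
    omega

theorem comp_skipAt (h : IsVerticalOrder L n s π) (hs : s 0 = 1) {z : ℕ} (hz : π z = 0)
    (hz1 : 1 ≤ z) (hzn : z ≤ n) :
    IsVerticalOrder L (n - 1) (Function.update s 0 0) (π ∘ skipAt z) := by
  have hskip_le {i : ℕ} (hi : i ≤ n - 1) : skipAt z i ≤ n := (skipAt_le_succ z i).trans (by omega)
  have hne {i : ℕ} (hi1 : 1 ≤ i) (hi : i ≤ n - 1) : π (skipAt z i) ≠ 0 :=
    h.1.ne_zero_of_ne hs hz hz1 hzn ((le_skipAt z i).trans' hi1) (hskip_le hi) (skipAt_ne z i)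
  refine ⟨⟨fun i hi1 hi => h.1.1 _ ((le_skipAt z i).trans' hi1) (hskip_le hi), fun c hc => ?_⟩,
    fun i i' hi1 hii' hi' _ _ => ?_⟩
  · rcases Nat.eq_zero_or_pos c with rfl | hc0
    · rw [Function.update_self]
      refine Finset.card_eq_zero.2 (Finset.filter_eq_empty_iff.2 fun i hi => ?_)
      rw [Finset.mem_Icc] at hi
      exact hne hi.1 hi.2
    · change prefixCount (π ∘ skipAt z) c (n - 1) = _
      rw [Function.update_of_ne hc0.ne', ← h.1.prefixCount_eq hc,
        ← prefixCount_skipAt hz1 (by rw [hz]; exact hc0.ne)]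
      rcases hzn.lt_or_eq with hzn | rfl
      · rw [show skipAt z (n - 1) = n by unfold skipAt; split_ifs <;> omega]
      · obtain ⟨m, rfl⟩ : ∃ m, z = m + 1 := ⟨z - 1, by omega⟩
        rw [Nat.add_sub_cancel, skipAt_of_lt (Nat.lt_succ_self m), prefixCount_succ, hz,
          if_neg hc0.ne, add_zero]
  · simp only [Function.comp_apply]
    rw [relLoc_comp_skipAt hz1 (hz ▸ hne hi1 (by omega)),
      relLoc_comp_skipAt hz1 (hz ▸ hne (by omega) hi')]
    exact h.2 _ _ ((le_skipAt z i).trans' hi1) (skipAt_strictMono z hii') (hskip_le hi')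
      (hne hi1 (by omega)) (hne (by omega) hi')

theorem add_succ_le (h : IsVerticalOrder L n s π) {c i : ℕ} (hc0 : c ≠ 0) (hcL : c ≤ L)
    (hin : i + 1 ≤ n) (hi : π i ≠ 0) (hsep : π (i + 1) = 0) :
    s c + (i + 1) ≤ n + relLoc π i := by
  have htail := prefixCount_le_add_sub π c hin
  have hsep' : prefixCount π c (i + 1) = prefixCount π c i := by
    rw [prefixCount_succ, hsep, if_neg (Ne.symm hc0), add_zero]
  have hhead := h.prefixCount_le_relLoc hc0 (by omega) hi
  rw [h.1.prefixCount_eq hcL, hsep'] at htail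
  omega

end IsVerticalOrder

theorem le_sStar1_one_add {R k dC : ℕ} (hdC : 1 ≤ dC) (hkd : k ≤ R - 1 + dC) :
    k ≤ sStar1 R k 1 + dC := by
  unfold sStar1
  rw [if_neg one_ne_zero]
  rcases Nat.eq_zero_or_pos ((k - 1) / R) with hq | hq
  · rw [if_neg (by omega), if_pos (by omega), hq, zero_mul]
    omega
  · have hR : R ≠ 0 := by rintro rfl; simp at hq
    rw [if_pos (show 1 ≤ (k - 1) / R from hq)]
    omega

theorem weight_of_eq_zero {dI dC : ℕ} {βI βC : ℝ} {π : ℕ → ℕ} {i : ℕ} (h : π i = 0) :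
    weight dI dC βI βC π i = ((dI + dC + 1 - i : ℕ) : ℝ) * βC :=
  if_pos h

theorem weight_of_ne_zero {dI dC : ℕ} {βI βC : ℝ} {π : ℕ → ℕ} {i : ℕ} (h : π i ≠ 0) :
    weight dI dC βI βC π i = (aCoef dI π i : ℝ) * βI + (bCoef dC π i : ℝ) * βC :=
  if_neg h

theorem stmt16_general (L R k dI dC : ℕ) (βI βC : ℝ)
    (hL : 1 ≤ L)
    (hdI : dI = R - 1) (hdC : 1 ≤ dC) (hkd : k ≤ dI + dC)
    (j : ℕ) (hj1 : 1 ≤ j) (hjk : j + 1 ≤ k)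
    (πa πb : ℕ → ℕ) (ha : IsPiJ L R k j πa) (hb : IsPiJ L R k (j + 1) πb) :
    aCoef dI πa (j + 1) = aCoef dI πb j ∧
    bCoef dC πb j = bCoef dC πa (j + 1) + 1 ∧
    weight dI dC βI βC πb j - weight dI dC βI βC πa (j + 1) = βC ∧
    weight dI dC βI βC πb j + weight dI dC βI βC πb (j + 1) =
      weight dI dC βI βC πa j + weight dI dC βI βC πa (j + 1) := by
  have hsame := (ha.2.comp_skipAt rfl ha.1 hj1 (by omega)).eqOn
    (hb.2.comp_skipAt rfl hb.1 (by omega) hjk) (by simp)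
  have hb0 : πb j ≠ 0 := hb.2.1.ne_zero_of_ne rfl hb.1 (by omega) hjk hj1 (by omega) (by omega)
  have hval : πa (j + 1) = πb j := by
    simpa [skipAt_self, skipAt_of_lt] using hsame j hj1 (by omega)
  have hrel : relLoc πa (j + 1) = relLoc πb j := by
    rw [← skipAt_self, ← relLoc_comp_skipAt hj1 (by rw [skipAt_self, ha.1, hval]; exact hb0),
      relLoc_congr (fun t ht1 htj => hsame t ht1 (by omega)) hj1,
      relLoc_comp_skipAt (by omega) (by rw [skipAt_of_lt (by omega), hb.1]; exact hb0),
      skipAt_of_lt (by omega)]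
  have hbound := hb.2.add_succ_le one_ne_zero hL hjk hb0 hb.1
  have hs1 := le_sStar1_one_add (R := R) hdC (hdI ▸ hkd)
  have hrelj := relLoc_le_self πb j
  have hA : aCoef dI πa (j + 1) = aCoef dI πb j := by rw [aCoef, aCoef, hrel]
  have hB : bCoef dC πb j = bCoef dC πa (j + 1) + 1 := by rw [bCoef, bCoef, hrel]; omega
  have hW : weight dI dC βI βC πb j - weight dI dC βI βC πa (j + 1) = βC := by
    rw [weight_of_ne_zero hb0, weight_of_ne_zero (hval ▸ hb0), ← hA, hB]
    push_cast
    ring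
  refine ⟨hA, hB, hW, ?_⟩
  rw [weight_of_eq_zero hb.1, weight_of_eq_zero ha.1,
    show dI + dC + 1 - j = dI + dC + 1 - (j + 1) + 1 by omega]
  push_cast
  linarith

/-- `a_{j+1}(π^(j)) = a_j(π^(j+1))` and `b_j(π^(j+1)) = b_{j+1}(π^(j)) + 1`;
consequently `w_j(π^(j+1)) − w_{j+1}(π^(j)) = β_C` and
`w_j(π^(j+1)) + w_{j+1}(π^(j+1)) = w_j(π^(j)) + w_{j+1}(π^(j))`. -/
theorem stmt16 (L R k dI dC : ℕ) (βI βC : ℝ)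
    (hL : 1 ≤ L) (hR : 2 ≤ R) (hk : 2 ≤ k)
    (hdI : dI = R - 1) (hdC : 1 ≤ dC) (hkd : k ≤ dI + dC)
    (hβ : βC ≤ βI) (hβC : 0 < βC)
    (hk1LR : k - 1 ≤ L * R)
    (j : ℕ) (hj1 : 1 ≤ j) (hjk : j + 1 ≤ k)
    (πa πb : ℕ → ℕ) (ha : IsPiJ L R k j πa) (hb : IsPiJ L R k (j + 1) πb) :
    aCoef dI πa (j + 1) = aCoef dI πb j ∧
    bCoef dC πb j = bCoef dC πa (j + 1) + 1 ∧
    weight dI dC βI βC πb j - weight dI dC βI βC πa (j + 1) = βC ∧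
    weight dI dC βI βC πb j + weight dI dC βI βC πb (j + 1) =
      weight dI dC βI βC πa j + weight dI dC βI βC πa (j + 1) :=
  stmt16_general L R k dI dC βI βC hL hdI hdC hkd j hj1 hjk πa πb ha hb
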